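/- Let (A_n) be a sequence of matrices in the indefinite orthogonal group O(p,q) (p+q = d ≥ 1) such that the operator norms ‖A_n‖ tend to infinity. Then there exists a subsequence (A_{n_k}) and a sequence of vectors v_k in ℝ^d with v_k → v_∞ ≠ 0 and A_{n_k} v_k → 0. -/

import Mathlib

/-!
If `J` is the diagonal signature matrix, then `A ∈ O(p,q)` means `Aᵀ J A = J`, so
`A⁻¹ = J Aᵀ J` has the same operator norm as `A`. Hence `‖A_n⁻¹‖ → ∞`. Take a vector `u_n` in the
unit ball on which `A_n⁻¹` nearly attains its norm; normalising `A_n⁻¹ u_n` gives a unit vector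
`w_n` with `‖A_n w_n‖ ≤ 1 / ‖A_n⁻¹ u_n‖ → 0`. Compactness of the unit sphere then provides a
subsequence along which `w_n` converges to a unit vector.
-/

open Filter Topology
open scoped RealInnerProductSpace

noncomputable def pqForm (p q : ℕ) (v w : EuclideanSpace ℝ (Fin (p + q))) : ℝ :=
  ∑ i : Fin (p + q), (if (i : ℕ) < p then (1 : ℝ) else -1) * v i * w i

section RightInverse

variable {E F : Type*} [NormedAddCommGroup E] [NormedSpace ℝ E] [NormedAddCommGroup F]
  [NormedSpace ℝ F]

theorem ContinuousLinearMap.exists_norm_eq_one_norm_apply_lt_inv {A : E →L[ℝ] F}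
    {B : F →L[ℝ] E} (hAB : ∀ u, A (B u) = u) {r : ℝ} (hr : 0 < r) (hrB : r < ‖B‖) :
    ∃ w, ‖w‖ = 1 ∧ ‖A w‖ < r⁻¹ := by
  obtain ⟨u, hu, hBu⟩ := B.exists_lt_apply_of_lt_opNorm hrB
  have hBu_pos : 0 < ‖B u‖ := hr.trans hBu
  refine ⟨‖B u‖⁻¹ • B u, norm_smul_inv_norm (norm_pos_iff.mp hBu_pos), ?_⟩
  calc ‖A (‖B u‖⁻¹ • B u)‖ = ‖B u‖⁻¹ * ‖u‖ := by
        rw [map_smul, hAB, norm_smul, norm_inv, norm_norm]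
    _ < ‖B u‖⁻¹ := mul_lt_of_lt_one_right (inv_pos.mpr hBu_pos) hu
    _ < r⁻¹ := inv_strictAnti₀ hr hBu

theorem exists_subseq_tendsto_apply_zero_of_tendsto_norm_rightInverse [ProperSpace E]
    {A : ℕ → E →L[ℝ] F} {B : ℕ → F →L[ℝ] E} (hAB : ∀ n u, A n (B n u) = u)
    (hB : Tendsto (fun n => ‖B n‖) atTop atTop) :
    ∃ nk : ℕ → ℕ, StrictMono nk ∧ ∃ (v : ℕ → E) (vlim : E),
      Tendsto v atTop (𝓝 vlim) ∧ vlim ≠ 0 ∧ Tendsto (fun k => A (nk k) (v k)) atTop (𝓝 0) := by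
  obtain ⟨φ, hφ, hφB⟩ :=
    extraction_forall_of_eventually fun k : ℕ => hB.eventually_gt_atTop ((k : ℝ) + 1)
  choose w hw_norm hAw using fun k =>
    (A (φ k)).exists_norm_eq_one_norm_apply_lt_inv (hAB (φ k)) k.cast_add_one_pos (hφB k)
  have hw_sphere : ∀ k, w k ∈ Metric.sphere (0 : E) 1 := by simpa using hw_norm
  obtain ⟨vlim, hvlim, ψ, hψ, hw_tendsto⟩ :=
    (isCompact_sphere (0 : E) 1).tendsto_subseq hw_sphere
  have hAw_tendsto : Tendsto (fun k => A (φ k) (w k)) atTop (𝓝 0) := by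
    refine squeeze_zero_norm (fun k => (hAw k).le) ?_
    simpa only [one_div] using tendsto_one_div_add_atTop_nhds_zero_nat (𝕜 := ℝ)
  exact ⟨φ ∘ ψ, hφ.comp hψ, w ∘ ψ, vlim, hw_tendsto, ne_zero_of_mem_unit_sphere ⟨vlim, hvlim⟩,
    hAw_tendsto.comp hψ.tendsto_atTop⟩

end RightInverse

section IndefiniteOrthogonal

variable {p q : ℕ} {A : EuclideanSpace ℝ (Fin (p + q)) →L[ℝ] EuclideanSpace ℝ (Fin (p + q))}

noncomputable def pqSignature (p q : ℕ) :
    EuclideanSpace ℝ (Fin (p + q)) ≃ₗᵢ[ℝ] EuclideanSpace ℝ (Fin (p + q)) :=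
  .piLpCongrRight 2 fun i => if (i : ℕ) < p then .refl ℝ ℝ else .neg ℝ

theorem pqSignature_apply (v : EuclideanSpace ℝ (Fin (p + q))) (i : Fin (p + q)) :
    pqSignature p q v i = (if (i : ℕ) < p then (1 : ℝ) else -1) * v i := by
  simp only [pqSignature, LinearIsometryEquiv.piLpCongrRight_apply]
  split_ifs <;> simp

theorem pqSignature_pqSignature (v : EuclideanSpace ℝ (Fin (p + q))) :
    pqSignature p q (pqSignature p q v) = v := by
  ext i
  simp only [pqSignature_apply]
  split_ifs <;> ring

theorem inner_pqSignature_left (v w : EuclideanSpace ℝ (Fin (p + q))) :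
    ⟪pqSignature p q v, w⟫ = pqForm p q v w := by
  simp only [PiLp.inner_apply, pqSignature_apply, RCLike.inner_apply, conj_trivial, pqForm]
  exact Finset.sum_congr rfl fun i _ => by ring

noncomputable def pqAdjoint
    (A : EuclideanSpace ℝ (Fin (p + q)) →L[ℝ] EuclideanSpace ℝ (Fin (p + q))) :
    EuclideanSpace ℝ (Fin (p + q)) →L[ℝ] EuclideanSpace ℝ (Fin (p + q)) :=
  (pqSignature p q : _ →L[ℝ] _) ∘L ContinuousLinearMap.adjoint A ∘L (pqSignature p q : _ →L[ℝ] _)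

theorem norm_pqAdjoint : ‖pqAdjoint A‖ = ‖A‖ := by
  simp [pqAdjoint]

theorem adjoint_apply_pqSignature_apply (hA : ∀ v w, pqForm p q (A v) (A w) = pqForm p q v w)
    (v : EuclideanSpace ℝ (Fin (p + q))) :
    ContinuousLinearMap.adjoint A (pqSignature p q (A v)) = pqSignature p q v :=
  ext_inner_right ℝ fun w => by
    rw [ContinuousLinearMap.adjoint_inner_left, inner_pqSignature_left, inner_pqSignature_left,
      hA]

theorem pqAdjoint_apply_apply (hA : ∀ v w, pqForm p q (A v) (A w) = pqForm p q v w)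
    (v : EuclideanSpace ℝ (Fin (p + q))) :
    pqAdjoint A (A v) = v := by
  simp only [pqAdjoint, ContinuousLinearMap.comp_apply, LinearIsometryEquiv.coe_coe'',
    adjoint_apply_pqSignature_apply hA, pqSignature_pqSignature]

theorem apply_pqAdjoint_apply (hA : ∀ v w, pqForm p q (A v) (A w) = pqForm p q v w)
    (u : EuclideanSpace ℝ (Fin (p + q))) :
    A (pqAdjoint A u) = u := by
  have hleft : (pqAdjoint A).toLinearMap ∘ₗ A.toLinearMap = LinearMap.id :=
    LinearMap.ext (pqAdjoint_apply_apply hA ·)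
  exact LinearMap.congr_fun ((LinearMap.comp_eq_id_comm ℝ _).mpr hleft) u

end IndefiniteOrthogonal

theorem stmt0_general (p q : ℕ)
    (A : ℕ → (EuclideanSpace ℝ (Fin (p + q)) →L[ℝ] EuclideanSpace ℝ (Fin (p + q))))
    (hO : ∀ n v w, pqForm p q (A n v) (A n w) = pqForm p q v w)
    (hnorm : Tendsto (fun n => ‖A n‖) atTop atTop) :
    ∃ nk : ℕ → ℕ, StrictMono nk ∧
      ∃ (v : ℕ → EuclideanSpace ℝ (Fin (p + q))) (vlim : EuclideanSpace ℝ (Fin (p + q))),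
        Tendsto v atTop (nhds vlim) ∧ vlim ≠ 0 ∧
        Tendsto (fun k => A (nk k) (v k)) atTop (nhds 0) :=
  exists_subseq_tendsto_apply_zero_of_tendsto_norm_rightInverse
    (fun n => apply_pqAdjoint_apply (hO n)) (by simpa only [norm_pqAdjoint] using hnorm)

/-- For a sequence in `O(p,q)` with operator norms tending to infinity, there is a subsequence
admitting strongly approximately stable vectors. -/
theorem stmt0 (p q : ℕ) (hd : 1 ≤ p + q)
    (A : ℕ → (EuclideanSpace ℝ (Fin (p + q)) →L[ℝ] EuclideanSpace ℝ (Fin (p + q))))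
    (hO : ∀ n v w, pqForm p q (A n v) (A n w) = pqForm p q v w)
    (hnorm : Tendsto (fun n => ‖A n‖) atTop atTop) :
    ∃ nk : ℕ → ℕ, StrictMono nk ∧
      ∃ (v : ℕ → EuclideanSpace ℝ (Fin (p + q))) (vlim : EuclideanSpace ℝ (Fin (p + q))),
        Tendsto v atTop (nhds vlim) ∧ vlim ≠ 0 ∧
        Tendsto (fun k => A (nk k) (v k)) atTop (nhds 0) :=
  stmt0_general p q A hO hnorm
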